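/- arXiv:1507.07209 — 2 statements merged into one kernel-verified Lean document; each statement's English description precedes it below -/
import Mathlib

section
/- With G_m as in Example 2 (2 copies of T1 with clusters {1,2},{1,2,3}; 2 copies of T12 with clusters {3,4},{2,3,4}; 1 copy of T14 with clusters {1,3},{2,4}; 1 copy of T15 with clusters {1,4},{2,3}), for every 3-element subset Y of {1,2,3,4}, the restriction T13|_Y of the tree T13 (clusters {1,2},{3,4}) is not a minimizer of Σ_{T in G_m} l(T|_Y, S') over rooted binary trees S' on Y; in fact its score is 4 on each Y while the minimum is 3. -/
open scoped Classical

/-- A rooted binary phylogenetic tree on the leaf set `L ⊆ X`, encoded (as usual,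
and as in the paper) by its set of clusters: a binary hierarchy on `L` containing
`L` and all singletons. -/
structure PTree (X : Type*) [DecidableEq X] (L : Finset X) where
  clusters : Finset (Finset X)
  subset_leaves : ∀ C ∈ clusters, C ⊆ L
  cluster_nonempty : ∀ C ∈ clusters, C.Nonempty
  leaves_mem : L ∈ clusters
  singleton_mem : ∀ x ∈ L, ({x} : Finset X) ∈ clusters
  hierarchy : ∀ C ∈ clusters, ∀ D ∈ clusters, C ⊆ D ∨ D ⊆ C ∨ Disjoint C D
  binary : ∀ C ∈ clusters, 1 < C.card →
    ∃ A ∈ clusters, ∃ B ∈ clusters, Disjoint A B ∧ A ∪ B = C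

variable {X : Type*} [DecidableEq X]

/-- The maximal members of the cluster family `Tcl` contained in `C`. -/
noncomputable def maxClustersIn (Tcl : Finset (Finset X)) (C : Finset X) :
    Finset (Finset X) :=
  Tcl.filter (fun D => D ⊆ C ∧ ∀ D' ∈ Tcl, D ⊂ D' → ¬ D' ⊆ C)

/-- `k_T(C)`: the number of maximal clusters of `T` contained in `C`. -/
noncomputable def kOf (Tcl : Finset (Finset X)) (C : Finset X) : ℕ :=
  (maxClustersIn Tcl C).card

/-- MDC score computed from cluster families: the sum over nontrivial clusters `C`
of the species tree (clusters other than the leaf set `L` and singletons) of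
`k_T(C) - 1` (Nakhleh et al.'s formula). -/
noncomputable def mdcOfClusters (Tcl Scl : Finset (Finset X)) (L : Finset X) : ℕ :=
  ∑ C ∈ Scl.filter (fun C => C ≠ L ∧ C.card ≠ 1), (kOf Tcl C - 1)

/-- The MDC score `l(T,S)` of a gene tree `T` with respect to a species tree `S`. -/
noncomputable def mdc {L : Finset X} (T S : PTree X L) : ℕ :=
  mdcOfClusters T.clusters S.clusters L

/-- The cluster set of the restriction `T|_Y` of `T` to the leaf set `Y`:
the nonempty intersections of clusters of `T` with `Y`. -/
noncomputable def restrictClusters {L : Finset X} (T : PTree X L) (Y : Finset X) :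
    Finset (Finset X) :=
  (T.clusters.image (· ∩ Y)).filter (fun C => C.Nonempty)

/-- The full cluster set of a rooted binary tree on leaf set `{0,1,2,3} = Fin 4`
with nontrivial clusters `a` and `b`. -/
noncomputable def cl4 (a b : Finset (Fin 4)) : Finset (Finset (Fin 4)) :=
  {Finset.univ, {0}, {1}, {2}, {3}, a, b}

/-!
A rooted binary tree on a 3-element leaf set `Y` has exactly one cluster besides `Y` and the
singletons, its cherry `P`, and every 2-subset of `Y` is the cherry of such a tree. Hence the
score of a species tree on `Y` only depends on its cherry `P` and equals
`Σ w_T (k_{T|Y}(P) - 1)`; the claim reduces to comparing this for the three 2-subsets of each `Y`,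
which is a finite computation.
-/

theorem Finset.singleton_subset_or_disjoint {X : Type*} [DecidableEq X] (x : X) (C : Finset X) :
    {x} ⊆ C ∨ Disjoint {x} C := by
  by_cases hx : x ∈ C
  · exact .inl (Finset.singleton_subset_iff.mpr hx)
  · exact .inr (Finset.disjoint_singleton_left.mpr hx)

theorem mdcOfClusters_eq_of_filter_eq_singleton {X : Type*} [DecidableEq X]
    {Tcl Scl : Finset (Finset X)} {L P : Finset X}
    (h : Scl.filter (fun C => C ≠ L ∧ C.card ≠ 1) = {P}) :
    mdcOfClusters Tcl Scl L = kOf Tcl P - 1 := by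
  rw [mdcOfClusters, h, Finset.sum_singleton]

namespace PTree

variable {X : Type*} [DecidableEq X] {Y P : Finset X}

theorem exists_nontrivialClusters_eq_singleton (hY : Y.card = 3) (S : PTree X Y) :
    ∃ P ⊆ Y, P.card = 2 ∧ S.clusters.filter (fun C => C ≠ Y ∧ C.card ≠ 1) = {P} := by
  obtain ⟨A, hA, B, hB, hAB, hABY⟩ := S.binary Y S.leaves_mem (by omega)
  have hcard : A.card + B.card = 3 := by
    rw [← Finset.card_union_of_disjoint hAB, hABY, hY]
  have hApos := (S.cluster_nonempty A hA).card_pos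
  have hBpos := (S.cluster_nonempty B hB).card_pos
  obtain ⟨P, hP, hP2⟩ : ∃ P ∈ S.clusters, P.card = 2 := by
    rcases (by omega : A.card = 2 ∨ B.card = 2) with h | h
    exacts [⟨A, hA, h⟩, ⟨B, hB, h⟩]
  have hPY := S.subset_leaves P hP
  refine ⟨P, hPY, hP2, Finset.eq_singleton_iff_unique_mem.mpr ⟨?_, ?_⟩⟩
  · exact Finset.mem_filter.mpr ⟨hP, fun h => by simp [h, hY] at hP2, by omega⟩
  rintro C hC'
  obtain ⟨hC, hCY, hC1⟩ := Finset.mem_filter.mp hC'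
  have hCpos := (S.cluster_nonempty C hC).card_pos
  have hC2 : C.card = 2 := by
    have := Finset.card_lt_card ((S.subset_leaves C hC).ssubset_of_ne hCY)
    omega
  rcases S.hierarchy C hC P hP with h | h | h
  · exact Finset.eq_of_subset_of_card_le h (by omega)
  · exact (Finset.eq_of_subset_of_card_le h (by omega)).symm
  · have := Finset.card_le_card (Finset.union_subset (S.subset_leaves C hC) hPY)
    rw [Finset.card_union_of_disjoint h] at this
    omega

theorem mem_cherryClusters {C : Finset X} :
    C ∈ insert Y (insert P (Y.image singleton)) ↔ C = Y ∨ C = P ∨ ∃ x ∈ Y, {x} = C := by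
  simp only [Finset.mem_insert, Finset.mem_image]

def ofCherry (hY : Y.card = 3) (hPY : P ⊆ Y) (hP : P.card = 2) : PTree X Y where
  clusters := insert Y (insert P (Y.image singleton))
  subset_leaves C hC := by
    rcases mem_cherryClusters.mp hC with rfl | rfl | ⟨x, hx, rfl⟩
    exacts [subset_rfl, hPY, Finset.singleton_subset_iff.mpr hx]
  cluster_nonempty C hC := by
    rcases mem_cherryClusters.mp hC with rfl | rfl | ⟨x, -, rfl⟩
    exacts [Finset.card_pos.mp (by omega), Finset.card_pos.mp (by omega),
      Finset.singleton_nonempty x]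
  leaves_mem := Finset.mem_insert_self _ _
  singleton_mem x hx := mem_cherryClusters.mpr (.inr (.inr ⟨x, hx, rfl⟩))
  hierarchy C hC D hD := by
    rcases mem_cherryClusters.mp hC with rfl | rfl | ⟨x, hx, rfl⟩ <;>
      rcases mem_cherryClusters.mp hD with rfl | rfl | ⟨y, hy, rfl⟩
    all_goals first
      | exact .inl subset_rfl
      | exact .inl hPY
      | exact .inr (.inl hPY)
      | exact .inl (Finset.singleton_subset_iff.mpr hx)
      | exact .inr (.inl (Finset.singleton_subset_iff.mpr hy))
      | exact (Finset.singleton_subset_or_disjoint x _).imp_right .inr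
      | exact .inr ((Finset.singleton_subset_or_disjoint y _).imp_right fun h => h.symm)
  binary C hC hC1 := by
    rcases mem_cherryClusters.mp hC with rfl | rfl | ⟨x, -, rfl⟩
    · obtain ⟨z, hz⟩ := Finset.card_eq_one.mp
        (by rw [Finset.card_sdiff_of_subset hPY]; omega : (C \ P).card = 1)
      have hzC : z ∈ C := Finset.sdiff_subset (hz ▸ Finset.mem_singleton_self z)
      refine ⟨P, Finset.mem_insert_of_mem (Finset.mem_insert_self _ _), C \ P, ?_,
        Finset.disjoint_sdiff, Finset.union_sdiff_of_subset hPY⟩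
      exact mem_cherryClusters.mpr (.inr (.inr ⟨z, hzC, hz.symm⟩))
    · obtain ⟨a, b, hab, rfl⟩ := Finset.card_eq_two.mp hP
      refine ⟨{a}, mem_cherryClusters.mpr (.inr (.inr ⟨a, hPY (by simp), rfl⟩)),
        {b}, mem_cherryClusters.mpr (.inr (.inr ⟨b, hPY (by simp), rfl⟩)),
        Finset.disjoint_singleton.mpr hab, (Finset.insert_eq a {b}).symm⟩
    · simp at hC1

theorem nontrivialClusters_ofCherry (hY : Y.card = 3) (hPY : P ⊆ Y) (hP : P.card = 2) :
    (ofCherry hY hPY hP).clusters.filter (fun C => C ≠ Y ∧ C.card ≠ 1) = {P} := by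
  obtain ⟨Q, -, -, hQ⟩ := (ofCherry hY hPY hP).exists_nontrivialClusters_eq_singleton hY
  have hPmem : P ∈ (ofCherry hY hPY hP).clusters.filter (fun C => C ≠ Y ∧ C.card ≠ 1) :=
    Finset.mem_filter.mpr ⟨mem_cherryClusters.mpr (.inr (.inl rfl)),
      fun h => by simp [h, hY] at hP, by omega⟩
  rw [hQ] at hPmem ⊢
  rw [Finset.mem_singleton.mp hPmem]

end PTree

/-- Example 2, non-heredity: for every 3-element subset `Y`, the restricted total MDC
score of `T₁₃|_Y` is 4, while the minimum over rooted binary trees on `Y` is 3. -/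
theorem stmt14 (T1 T12 T13 T14 T15 : PTree (Fin 4) Finset.univ)
    (h1 : T1.clusters = cl4 {0,1} {0,1,2})
    (h12 : T12.clusters = cl4 {2,3} {1,2,3})
    (h13 : T13.clusters = cl4 {0,1} {2,3})
    (h14 : T14.clusters = cl4 {0,2} {1,3})
    (h15 : T15.clusters = cl4 {0,3} {1,2}) :
    ∀ Y : Finset (Fin 4), Y.card = 3 →
      (2 * mdcOfClusters (restrictClusters T1 Y) (restrictClusters T13 Y) Y + 2 * mdcOfClusters (restrictClusters T12 Y) (restrictClusters T13 Y) Y + 1 * mdcOfClusters (restrictClusters T14 Y) (restrictClusters T13 Y) Y + 1 * mdcOfClusters (restrictClusters T15 Y) (restrictClusters T13 Y) Y = 4) ∧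
      (∀ S' : PTree (Fin 4) Y, 3 ≤ 2 * mdcOfClusters (restrictClusters T1 Y) S'.clusters Y + 2 * mdcOfClusters (restrictClusters T12 Y) S'.clusters Y + 1 * mdcOfClusters (restrictClusters T14 Y) S'.clusters Y + 1 * mdcOfClusters (restrictClusters T15 Y) S'.clusters Y) ∧
      (∃ S' : PTree (Fin 4) Y, 2 * mdcOfClusters (restrictClusters T1 Y) S'.clusters Y + 2 * mdcOfClusters (restrictClusters T12 Y) S'.clusters Y + 1 * mdcOfClusters (restrictClusters T14 Y) S'.clusters Y + 1 * mdcOfClusters (restrictClusters T15 Y) S'.clusters Y = 3) := by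
  intro Y hY
  have hYs : Y = {0,1,2} ∨ Y = {0,1,3} ∨ Y = {0,2,3} ∨ Y = {1,2,3} := by
    revert Y; decide
  let cost (P : Finset (Fin 4)) : ℕ :=
    2 * (kOf (restrictClusters T1 Y) P - 1) + 2 * (kOf (restrictClusters T12 Y) P - 1) +
      1 * (kOf (restrictClusters T14 Y) P - 1) + 1 * (kOf (restrictClusters T15 Y) P - 1)
  obtain ⟨hcost_ge, P, hPY, hP2, hcostP⟩ :
      (∀ P ⊆ Y, P.card = 2 → 3 ≤ cost P) ∧ ∃ P ⊆ Y, P.card = 2 ∧ cost P = 3 := by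
    rcases hYs with rfl | rfl | rfl | rfl <;>
      simp only [cost, restrictClusters, h1, h12, h14, h15] <;> decide
  refine ⟨?_, fun S' => ?_, ⟨.ofCherry hY hPY hP2, ?_⟩⟩
  · rcases hYs with rfl | rfl | rfl | rfl <;>
      simp only [restrictClusters, h1, h12, h13, h14, h15] <;> decide
  · obtain ⟨Q, hQY, hQ2, hS'⟩ := S'.exists_nontrivialClusters_eq_singleton hY
    simp only [mdcOfClusters_eq_of_filter_eq_singleton hS']
    exact hcost_ge Q hQY hQ2
  · simpa only [mdcOfClusters_eq_of_filter_eq_singleton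
      (PTree.nontrivialClusters_ofCherry hY hPY hP2)] using hcostP
end

section
/- Let X = {1,2,3,4} and let G_m consist of 8 copies of T1 (clusters {1,2},{1,2,3}), 6 copies of T2 (clusters {1,2},{1,2,4}), 1 copy of T3 (clusters {1,3},{1,2,3}), 7 copies of T4 (clusters {1,3},{1,3,4}), 7 copies of T6 (clusters {1,4},{1,3,4}) and 4 copies of T15 (clusters {1,4},{2,3}). Then T1 is the unique minimizer of the total MDC score over all 15 rooted binary trees on X with score 50, T6 has score 55, yet for every 3-element subset Y of X, the restriction T6|_Y has strictly smaller total MDC score on the restricted gene trees than T1|_Y. -/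
open scoped Classical

variable {X : Type*} [DecidableEq X]

/-
Exchanging the order of summation, the total score of a species tree `S` is the sum, over the
nontrivial clusters `C` of `S`, of the weight `w(C) = Σ_T mult(T) (k_T(C) - 1)`.  A binary tree on
four leaves has a pair of nontrivial clusters that is either a 2-cluster inside a 3-cluster or two
disjoint 2-clusters, and for every such pair other than `{0,1} ⊂ {0,1,2}`, the clusters of `T₁`,
the two weights alone add up to at least 51, more than the score 50 of `T₁`.  The remaining claims
are finite computations.
-/

/-- The shapes of a pair of nontrivial clusters of a binary tree on four leaves: caterpillar or
balanced. -/
def IsQuartetClusterPair {α : Type*} (a b : Finset α) : Prop :=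
  (a.card = 2 ∧ b.card = 3 ∧ a ⊆ b) ∨ (a.card = 2 ∧ b.card = 2 ∧ Disjoint a b)

namespace IsQuartetClusterPair

variable {α : Type*} {a b : Finset α}

lemma ne (h : IsQuartetClusterPair a b) : a ≠ b := by
  rintro rfl
  rcases h with ⟨h2, h3, -⟩ | ⟨h2, -, hdisj⟩
  · omega
  · simp_all

lemma card_mem_two_three (h : IsQuartetClusterPair a b) :
    (a.card = 2 ∨ a.card = 3) ∧ (b.card = 2 ∨ b.card = 3) := by
  rcases h with ⟨h2, h3, -⟩ | ⟨h2, h2', -⟩ <;> omega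

end IsQuartetClusterPair

namespace PTree

variable {L : Finset X}

lemma ext_clusters {T S : PTree X L} (h : T.clusters = S.clusters) : T = S := by
  cases T; cases S; simp_all

lemma one_le_card {S : PTree X L} {C : Finset X} (hC : C ∈ S.clusters) : 1 ≤ C.card :=
  Finset.card_pos.mpr (S.cluster_nonempty C hC)

lemma exists_card_two_subset_of_card_three (S : PTree X L) {C : Finset X}
    (hC : C ∈ S.clusters) (hcard : C.card = 3) :
    ∃ A ∈ S.clusters, A.card = 2 ∧ A ⊆ C := by
  obtain ⟨A, hA, B, hB, hdisj, hunion⟩ := S.binary C hC (by omega)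
  have hsum : A.card + B.card = 3 := by rw [← Finset.card_union_of_disjoint hdisj, hunion, hcard]
  have := one_le_card hA
  have := one_le_card hB
  rcases Nat.lt_or_ge A.card 2 with h | h
  · exact ⟨B, hB, by omega, hunion ▸ Finset.subset_union_right⟩
  · exact ⟨A, hA, by omega, hunion ▸ Finset.subset_union_left⟩

lemma exists_isQuartetClusterPair (S : PTree X L) (hL : L.card = 4) :
    ∃ a ∈ S.clusters, ∃ b ∈ S.clusters, IsQuartetClusterPair a b := by
  obtain ⟨A, hA, B, hB, hdisj, hunion⟩ := S.binary L S.leaves_mem (by omega)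
  have hsum : A.card + B.card = 4 := by rw [← Finset.card_union_of_disjoint hdisj, hunion, hL]
  have := one_le_card hA
  have := one_le_card hB
  obtain h | h | h : A.card = 1 ∨ A.card = 2 ∨ A.card = 3 := by omega
  · obtain ⟨a, ha, ha2, hab⟩ := S.exists_card_two_subset_of_card_three hB (by omega)
    exact ⟨a, ha, B, hB, Or.inl ⟨ha2, by omega, hab⟩⟩
  · exact ⟨A, hA, B, hB, Or.inr ⟨h, by omega, hdisj⟩⟩
  · obtain ⟨a, ha, ha2, hab⟩ := S.exists_card_two_subset_of_card_three hA h
    exact ⟨a, ha, A, hA, Or.inl ⟨ha2, h, hab⟩⟩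

end PTree

section WeightedScore

variable {ι : Type*} [Fintype ι]

/-- The total score against a multiset holding `w i` copies of the gene tree `G i`. -/
noncomputable def weightedMdc (w : ι → ℕ) (G : ι → Finset (Finset X))
    (Scl : Finset (Finset X)) (L : Finset X) : ℕ :=
  ∑ i, w i * mdcOfClusters (G i) Scl L

noncomputable def clusterWeight (w : ι → ℕ) (G : ι → Finset (Finset X)) (C : Finset X) : ℕ :=
  ∑ i, w i * (kOf (G i) C - 1)

lemma weightedMdc_eq_sum_clusterWeight (w : ι → ℕ) (G : ι → Finset (Finset X))
    (Scl : Finset (Finset X)) (L : Finset X) :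
    weightedMdc w G Scl L =
      ∑ C ∈ Scl.filter (fun C => C ≠ L ∧ C.card ≠ 1), clusterWeight w G C := by
  simp only [weightedMdc, mdcOfClusters, clusterWeight, Finset.mul_sum]
  exact Finset.sum_comm

lemma clusterWeight_add_le_weightedMdc (w : ι → ℕ) (G : ι → Finset (Finset X))
    {Scl : Finset (Finset X)} {L a b : Finset X} (hab : a ≠ b)
    (ha : a ∈ Scl) (haL : a ≠ L) (ha1 : a.card ≠ 1)
    (hb : b ∈ Scl) (hbL : b ≠ L) (hb1 : b.card ≠ 1) :
    clusterWeight w G a + clusterWeight w G b ≤ weightedMdc w G Scl L := by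
  rw [weightedMdc_eq_sum_clusterWeight, ← Finset.sum_pair hab]
  refine Finset.sum_le_sum_of_subset fun C hC => ?_
  rcases Finset.mem_insert.mp hC with rfl | hC
  · exact Finset.mem_filter.mpr ⟨ha, haL, ha1⟩
  rw [Finset.mem_singleton.mp hC]
  exact Finset.mem_filter.mpr ⟨hb, hbL, hb1⟩

end WeightedScore

noncomputable def restrictFamily (F : Finset (Finset X)) (Y : Finset X) : Finset (Finset X) :=
  (F.image (· ∩ Y)).filter (fun C => C.Nonempty)

lemma restrictClusters_eq_restrictFamily {L : Finset X} (T : PTree X L) (Y : Finset X) :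
    restrictClusters T Y = restrictFamily T.clusters Y :=
  rfl

lemma PTree.clusters_eq_cl4_of_mem (S : PTree (Fin 4) Finset.univ)
    (h01 : {0,1} ∈ S.clusters) (h012 : {0,1,2} ∈ S.clusters) :
    S.clusters = cl4 {0,1} {0,1,2} := by
  have mem_cl4_of_compatible : ∀ C : Finset (Fin 4), C.Nonempty →
      (C ⊆ {0,1} ∨ {0,1} ⊆ C ∨ Disjoint C {0,1}) →
      (C ⊆ {0,1,2} ∨ {0,1,2} ⊆ C ∨ Disjoint C {0,1,2}) → C ∈ cl4 {0,1} {0,1,2} := by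
    decide
  refine Finset.Subset.antisymm (fun C hC => mem_cl4_of_compatible C (S.cluster_nonempty C hC)
    (S.hierarchy C hC _ h01) (S.hierarchy C hC _ h012)) fun C hC => ?_
  simp only [cl4, Finset.mem_insert, Finset.mem_singleton] at hC
  rcases hC with rfl | rfl | rfl | rfl | rfl | rfl | rfl
  · exact S.leaves_mem
  all_goals first | exact S.singleton_mem _ (Finset.mem_univ _) | assumption

/-- The multiplicities in `G_m` of `T₁, T₂, T₃, T₄, T₆, T₁₅`. -/
def geneTreeCount : Fin 6 → ℕ := ![8, 6, 1, 7, 7, 4]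

noncomputable def geneTreeClusters : Fin 6 → Finset (Finset (Fin 4)) :=
  ![cl4 {0,1} {0,1,2}, cl4 {0,1} {0,1,3}, cl4 {0,2} {0,1,2}, cl4 {0,2} {0,2,3},
    cl4 {0,3} {0,2,3}, cl4 {0,3} {1,2}]

lemma weightedMdc_T1 :
    weightedMdc geneTreeCount geneTreeClusters (cl4 {0,1} {0,1,2}) Finset.univ = 50 := by
  decide

lemma weightedMdc_T6 :
    weightedMdc geneTreeCount geneTreeClusters (cl4 {0,3} {0,2,3}) Finset.univ = 55 := by
  decide

lemma weightedMdc_restrict_T6_lt_T1 : ∀ Y : Finset (Fin 4), Y.card = 3 →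
    weightedMdc geneTreeCount (fun i => restrictFamily (geneTreeClusters i) Y)
        (restrictFamily (cl4 {0,3} {0,2,3}) Y) Y <
      weightedMdc geneTreeCount (fun i => restrictFamily (geneTreeClusters i) Y)
        (restrictFamily (cl4 {0,1} {0,1,2}) Y) Y := by
  decide

lemma fifty_one_le_clusterWeight_add : ∀ a b : Finset (Fin 4), IsQuartetClusterPair a b →
    (a, b) ≠ ({0,1}, {0,1,2}) →
      51 ≤ clusterWeight geneTreeCount geneTreeClusters a +
        clusterWeight geneTreeCount geneTreeClusters b := by
  unfold IsQuartetClusterPair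
  decide

lemma fifty_lt_weightedMdc (S : PTree (Fin 4) Finset.univ)
    (hS : S.clusters ≠ cl4 {0,1} {0,1,2}) :
    50 < weightedMdc geneTreeCount geneTreeClusters S.clusters Finset.univ := by
  obtain ⟨a, ha, b, hb, hab⟩ := S.exists_isQuartetClusterPair (by simp)
  have hT1 : (a, b) ≠ ({0,1}, {0,1,2}) := by
    rintro ⟨⟩
    exact hS (S.clusters_eq_cl4_of_mem ha hb)
  have nontrivial : ∀ C : Finset (Fin 4), C.card = 2 ∨ C.card = 3 →
      C ≠ Finset.univ ∧ C.card ≠ 1 :=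
    fun C hC => ⟨fun h => by simp [h] at hC, by omega⟩
  obtain ⟨haL, ha1⟩ := nontrivial a hab.card_mem_two_three.1
  obtain ⟨hbL, hb1⟩ := nontrivial b hab.card_mem_two_three.2
  calc 50 < 51 := by norm_num
    _ ≤ _ := fifty_one_le_clusterWeight_add a b hab hT1
    _ ≤ _ := clusterWeight_add_le_weightedMdc _ _ hab.ne ha haL ha1 hb hbL hb1

/-- Example 3: with `G_m` = 8 copies of `T₁`, 6 of `T₂`, 1 of `T₃`, 7 of `T₄`,
7 of `T₆` and 4 of `T₁₅`, the tree `T₁` is the unique minimizer of the total MDC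
score with score 50, `T₆` has score 55, yet on every 3-element subset `Y` the
restriction `T₆|_Y` scores strictly less than `T₁|_Y`. -/
theorem stmt15 (T1 T2 T3 T4 T6 T15 : PTree (Fin 4) Finset.univ)
    (h1 : T1.clusters = cl4 {0,1} {0,1,2})
    (h2 : T2.clusters = cl4 {0,1} {0,1,3})
    (h3 : T3.clusters = cl4 {0,2} {0,1,2})
    (h4 : T4.clusters = cl4 {0,2} {0,2,3})
    (h6 : T6.clusters = cl4 {0,3} {0,2,3})
    (h15 : T15.clusters = cl4 {0,3} {1,2}) :
    8 * mdc T1 T1 + 6 * mdc T2 T1 + 1 * mdc T3 T1 + 7 * mdc T4 T1 + 7 * mdc T6 T1 + 4 * mdc T15 T1 = 50 ∧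
    (∀ S : PTree (Fin 4) Finset.univ, S ≠ T1 →
      8 * mdc T1 T1 + 6 * mdc T2 T1 + 1 * mdc T3 T1 + 7 * mdc T4 T1 + 7 * mdc T6 T1 + 4 * mdc T15 T1 < 8 * mdc T1 S + 6 * mdc T2 S + 1 * mdc T3 S + 7 * mdc T4 S + 7 * mdc T6 S + 4 * mdc T15 S) ∧
    8 * mdc T1 T6 + 6 * mdc T2 T6 + 1 * mdc T3 T6 + 7 * mdc T4 T6 + 7 * mdc T6 T6 + 4 * mdc T15 T6 = 55 ∧
    (∀ Y : Finset (Fin 4), Y.card = 3 →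
      8 * mdcOfClusters (restrictClusters T1 Y) (restrictClusters T6 Y) Y + 6 * mdcOfClusters (restrictClusters T2 Y) (restrictClusters T6 Y) Y + 1 * mdcOfClusters (restrictClusters T3 Y) (restrictClusters T6 Y) Y + 7 * mdcOfClusters (restrictClusters T4 Y) (restrictClusters T6 Y) Y + 7 * mdcOfClusters (restrictClusters T6 Y) (restrictClusters T6 Y) Y + 4 * mdcOfClusters (restrictClusters T15 Y) (restrictClusters T6 Y) Y <
      8 * mdcOfClusters (restrictClusters T1 Y) (restrictClusters T1 Y) Y + 6 * mdcOfClusters (restrictClusters T2 Y) (restrictClusters T1 Y) Y + 1 * mdcOfClusters (restrictClusters T3 Y) (restrictClusters T1 Y) Y + 7 * mdcOfClusters (restrictClusters T4 Y) (restrictClusters T1 Y) Y + 7 * mdcOfClusters (restrictClusters T6 Y) (restrictClusters T1 Y) Y + 4 * mdcOfClusters (restrictClusters T15 Y) (restrictClusters T1 Y) Y) := by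
  have score_eq : ∀ S : PTree (Fin 4) Finset.univ,
      8 * mdc T1 S + 6 * mdc T2 S + 1 * mdc T3 S + 7 * mdc T4 S + 7 * mdc T6 S + 4 * mdc T15 S =
        weightedMdc geneTreeCount geneTreeClusters S.clusters Finset.univ := fun S => by
    simp [weightedMdc, Fin.sum_univ_six, geneTreeCount, geneTreeClusters, mdc, h1, h2, h3, h4,
      h6, h15]
  have restricted_score_eq : ∀ (S : PTree (Fin 4) Finset.univ) (Y : Finset (Fin 4)),
      8 * mdcOfClusters (restrictClusters T1 Y) (restrictClusters S Y) Y
        + 6 * mdcOfClusters (restrictClusters T2 Y) (restrictClusters S Y) Y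
        + 1 * mdcOfClusters (restrictClusters T3 Y) (restrictClusters S Y) Y
        + 7 * mdcOfClusters (restrictClusters T4 Y) (restrictClusters S Y) Y
        + 7 * mdcOfClusters (restrictClusters T6 Y) (restrictClusters S Y) Y
        + 4 * mdcOfClusters (restrictClusters T15 Y) (restrictClusters S Y) Y =
        weightedMdc geneTreeCount (fun i => restrictFamily (geneTreeClusters i) Y)
          (restrictFamily S.clusters Y) Y := fun S Y => by
    simp [weightedMdc, Fin.sum_univ_six, geneTreeCount, geneTreeClusters,
      restrictClusters_eq_restrictFamily, h1, h2, h3, h4, h6, h15]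
  refine ⟨?_, fun S hS => ?_, ?_, fun Y hY => ?_⟩
  · rw [score_eq, h1, weightedMdc_T1]
  · rw [score_eq, score_eq, h1, weightedMdc_T1]
    exact fifty_lt_weightedMdc S fun h => hS (PTree.ext_clusters (h.trans h1.symm))
  · rw [score_eq, h6, weightedMdc_T6]
  · rw [restricted_score_eq, restricted_score_eq, h1, h6]
    exact weightedMdc_restrict_T6_lt_T1 Y hY
end
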